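/- arXiv:1407.4919 — 8 statements merged into one kernel-verified Lean document; each statement's English description precedes it below -/
import Mathlib

section
/- For all real x and all real ζ, |arctan( sin ζ / (cos ζ + e^{-x}) )| ≤ |ζ|, provided cos ζ + e^{-x} > 0. -/
/-! On `|ζ| < π/2` the denominator is at least `cos ζ > 0`, so the quotient is at most
`tan |ζ|` in absolute value and `arctan` (odd and monotone) brings it back to `|ζ|`;
for `|ζ| ≥ π/2` the bound `|arctan t| < π/2` suffices. -/

open Real

lemma Real.abs_arctan_lt_pi_div_two (t : ℝ) : |arctan t| < π / 2 :=
  abs_lt.2 ⟨neg_pi_div_two_lt_arctan t, arctan_lt_pi_div_two t⟩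

lemma Real.abs_arctan_sin_div_le_of_nonneg {ζ d : ℝ} (h₀ : 0 ≤ ζ) (hζ : ζ < π / 2)
    (hd : cos ζ ≤ d) : |arctan (sin ζ / d)| ≤ ζ := by
  have hcos : 0 < cos ζ := cos_pos_of_mem_Ioo ⟨by linarith [pi_pos], hζ⟩
  have hsin : 0 ≤ sin ζ := sin_nonneg_of_nonneg_of_le_pi h₀ (by linarith [pi_pos])
  have hquot : 0 ≤ sin ζ / d := div_nonneg hsin (hcos.le.trans hd)
  rw [abs_of_nonneg (arctan_nonneg.2 hquot)]
  calc arctan (sin ζ / d) ≤ arctan (tan ζ) := by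
        rw [tan_eq_sin_div_cos]
        exact arctan_strictMono.monotone (div_le_div_of_nonneg_left hsin hcos hd)
    _ = ζ := arctan_tan (by linarith [pi_pos]) hζ

lemma Real.abs_arctan_sin_div_le {ζ d : ℝ} (hζ : |ζ| < π / 2) (hd : cos ζ ≤ d) :
    |arctan (sin ζ / d)| ≤ |ζ| := by
  rcases le_or_gt 0 ζ with hpos | hneg
  · rw [abs_of_nonneg hpos] at hζ ⊢
    exact abs_arctan_sin_div_le_of_nonneg hpos hζ hd
  · rw [abs_of_neg hneg] at hζ ⊢
    have := abs_arctan_sin_div_le_of_nonneg (neg_nonneg.2 hneg.le) hζ ((cos_neg ζ).trans_le hd)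
    rwa [sin_neg, neg_div, arctan_neg, abs_neg] at this

theorem abs_arctan_le_general (x ζ : ℝ) :
    |Real.arctan (Real.sin ζ / (Real.cos ζ + Real.exp (-x)))| ≤ |ζ| := by
  rcases le_or_gt (π / 2) |ζ| with hlarge | hsmall
  · exact (abs_arctan_lt_pi_div_two _).le.trans hlarge
  · exact abs_arctan_sin_div_le hsmall (le_add_of_nonneg_right (exp_pos _).le)

theorem abs_arctan_le (x ζ : ℝ) (h : Real.cos ζ + Real.exp (-x) > 0) :
    |Real.arctan (Real.sin ζ / (Real.cos ζ + Real.exp (-x)))| ≤ |ζ| :=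
  abs_arctan_le_general x ζ
end

section
/- For all real x ≤ 0 and all real ζ with |ζ| ≤ π/10, the quantity r_ζ(x) := (1/4)·ln²(1 + 2 e^{x} cos ζ + e^{2x}) − (arctan( sin ζ / (cos ζ + e^{-x}) ))² satisfies r_ζ(x) ≥ (1/8) e^{2x}. -/
/-!
Write `e = exp x ∈ (0, 1]` and `t = e cos ζ ∈ [0, 1]`. Since `1 + 2t + e² ≥ (1 + t)²` and
`log (1 + t) ≥ t / 2`, the logarithm is at least `t`, so the first term is at least `e² cos² ζ / 4`.
The arctangent is bounded by its argument, which is at most `|sin ζ| e ≤ |ζ| e` because the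
denominator exceeds `e⁻¹`. Hence the difference is at least `e² (cos² ζ / 4 - ζ²)`, and
`cos ζ ≥ 1 - ζ² / 2` with `ζ² ≤ π² / 100 < 1 / 10` makes the bracket at least `1 / 8`.
-/

open Real

lemma Real.abs_arctan_le_abs (u : ℝ) : |arctan u| ≤ |u| := by
  have of_nonneg : ∀ v : ℝ, 0 ≤ v → arctan v ≤ v := fun v hv => by
    simpa only [tan_arctan] using le_tan (arctan_nonneg.2 hv) (arctan_lt_pi_div_two v)
  rcases le_total 0 u with hu | hu
  · rw [abs_of_nonneg hu, abs_of_nonneg (arctan_nonneg.2 hu)]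
    exact of_nonneg u hu
  · rw [abs_of_nonpos hu, abs_of_nonpos (arctan_le_zero.2 hu), ← arctan_neg]
    exact of_nonneg (-u) (neg_nonneg.2 hu)

lemma Real.half_le_log_one_add {y : ℝ} (h0 : 0 ≤ y) (h2 : y ≤ 2) : y / 2 ≤ log (1 + y) := by
  refine le_trans ?_ (le_log_one_add_of_nonneg h0)
  rw [le_div_iff₀ (by linarith)]
  nlinarith

lemma mul_le_log_one_add_two_mul_mul_add_sq {e c : ℝ} (he : 0 ≤ e) (he1 : e ≤ 1)
    (hc : 0 ≤ c) (hc1 : c ≤ 1) : e * c ≤ log (1 + 2 * e * c + e ^ 2) := by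
  have ht : 0 ≤ e * c := mul_nonneg he hc
  have hsq : (1 + e * c) ^ 2 ≤ 1 + 2 * e * c + e ^ 2 := by
    nlinarith [mul_le_mul_of_nonneg_left (mul_le_of_le_one_right hc hc1) he]
  calc e * c ≤ 2 * log (1 + e * c) := by
        linarith [half_le_log_one_add ht (by nlinarith [mul_le_one₀ he1 hc hc1])]
    _ = log ((1 + e * c) ^ 2) := by rw [log_pow]; norm_num
    _ ≤ log (1 + 2 * e * c + e ^ 2) := log_le_log (by positivity) hsq

lemma abs_arctan_sin_div_cos_add_exp_neg_le {x ζ : ℝ} (hc : 0 ≤ cos ζ) :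
    |arctan (sin ζ / (cos ζ + exp (-x)))| ≤ |ζ| * exp x := by
  have hden : exp (-x) ≤ cos ζ + exp (-x) := le_add_of_nonneg_left hc
  calc |arctan (sin ζ / (cos ζ + exp (-x)))| ≤ |sin ζ| / (cos ζ + exp (-x)) := by
        refine (abs_arctan_le_abs _).trans_eq ?_
        rw [abs_div, abs_of_pos ((exp_pos _).trans_le hden)]
    _ ≤ |ζ| / exp (-x) := div_le_div₀ (abs_nonneg _) abs_sin_le_abs (exp_pos _) hden
    _ = |ζ| * exp x := by rw [exp_neg, div_inv_eq_mul]

lemma one_div_eight_le_cos_sq_div_four_sub_sq {ζ : ℝ} (h : ζ ^ 2 ≤ 1 / 10) :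
    1 / 8 ≤ cos ζ ^ 2 / 4 - ζ ^ 2 := by
  have hcos : 1 - ζ ^ 2 / 2 ≤ cos ζ := one_sub_sq_div_two_le_cos
  nlinarith [pow_le_pow_left₀ (by linarith) hcos 2]

theorem r_zeta_lower_bound_nonpos (x ζ : ℝ) (hx : x ≤ 0) (hζ : |ζ| ≤ Real.pi / 10) :
    (1 / 4) * (Real.log (1 + 2 * Real.exp x * Real.cos ζ + Real.exp (2 * x))) ^ 2
      - (Real.arctan (Real.sin ζ / (Real.cos ζ + Real.exp (-x)))) ^ 2
      ≥ (1 / 8) * Real.exp (2 * x) := by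
  have hζ2 : ζ ^ 2 ≤ 1 / 10 := by
    rw [← sq_abs]
    nlinarith [abs_nonneg ζ, pi_lt_d2]
  have hc : 0 ≤ cos ζ := by nlinarith [one_sub_sq_div_two_le_cos (x := ζ)]
  have he : exp (2 * x) = exp x ^ 2 := by rw [mul_comm, exp_mul, rpow_two]
  have hlog := mul_le_log_one_add_two_mul_mul_add_sq (exp_pos x).le (exp_le_one_iff.2 hx) hc
    (cos_le_one ζ)
  have harctan := abs_arctan_sin_div_cos_add_exp_neg_le (x := x) hc
  rw [he]
  have hlog_sq : (exp x * cos ζ) ^ 2 ≤ log (1 + 2 * exp x * cos ζ + exp x ^ 2) ^ 2 :=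
    pow_le_pow_left₀ (by positivity) hlog 2
  have harctan_sq : arctan (sin ζ / (cos ζ + exp (-x))) ^ 2 ≤ (|ζ| * exp x) ^ 2 :=
    sq_le_sq' (abs_le.1 harctan).1 (abs_le.1 harctan).2
  nlinarith [one_div_eight_le_cos_sq_div_four_sub_sq hζ2, sq_abs ζ, sq_nonneg (exp x)]
end

section
/- For all real x > 0 and all real ζ with |ζ| ≤ π/10, the quantity r_ζ(x) := (1/4)·ln²(1 + 2 e^{x} cos ζ + e^{2x}) − (arctan( sin ζ / (cos ζ + e^{-x}) ))² satisfies r_ζ(x) ≥ x²/4. -/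
/-!
Since 1 + 2eˣ cos ζ + e²ˣ = (eˣ - 1)² + 2eˣ(1 + cos ζ) ≥ 2eˣ when cos ζ ≥ 0, the logarithm is at
least x + log 2, so the first term is at least (x + log 2)²/4 ≥ x²/4 + (log 2)²/4 for x > 0.
The arctan term is the argument of 1 + e^(x + iζ), which is at most |ζ| in absolute value, and
|ζ| ≤ π/10 < (log 2)/2.
-/

open Real

lemma abs_arctan_sin_div_cos_add_le_of_nonneg {ζ c : ℝ} (h0 : 0 ≤ ζ) (hπ : ζ < π / 2)
    (hc : 0 ≤ c) : |arctan (sin ζ / (cos ζ + c))| ≤ ζ := by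
  have hcos : 0 < cos ζ := cos_pos_of_mem_Ioo ⟨by linarith [pi_pos], hπ⟩
  have hsin : 0 ≤ sin ζ := sin_nonneg_of_nonneg_of_le_pi h0 (by linarith [pi_pos])
  have hy : 0 ≤ sin ζ / (cos ζ + c) := by positivity
  have hy_le : sin ζ / (cos ζ + c) ≤ tan ζ := by
    rw [tan_eq_sin_div_cos]
    exact div_le_div_of_nonneg_left hsin hcos (by linarith)
  rw [abs_of_nonneg (arctan_nonneg.2 hy)]
  calc arctan (sin ζ / (cos ζ + c)) ≤ arctan (tan ζ) := arctan_strictMono.monotone hy_le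
    _ = ζ := arctan_tan (by linarith [pi_pos]) hπ

lemma abs_arctan_sin_div_cos_add_le {ζ c : ℝ} (hζ : |ζ| < π / 2) (hc : 0 ≤ c) :
    |arctan (sin ζ / (cos ζ + c))| ≤ |ζ| := by
  rcases le_total 0 ζ with h0 | h0
  · rw [abs_of_nonneg h0] at hζ ⊢
    exact abs_arctan_sin_div_cos_add_le_of_nonneg h0 hζ hc
  · rw [abs_of_nonpos h0] at hζ ⊢
    have := abs_arctan_sin_div_cos_add_le_of_nonneg (neg_nonneg.2 h0) hζ hc
    rwa [sin_neg, cos_neg, neg_div, arctan_neg, abs_neg] at this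

lemma add_log_two_le_log_one_add_two_mul_exp_mul_cos_add_exp {x ζ : ℝ} (hcos : 0 ≤ cos ζ) :
    x + log 2 ≤ log (1 + 2 * exp x * cos ζ + exp (2 * x)) := by
  have hex := exp_pos x
  have hA : 2 * exp x ≤ 1 + 2 * exp x * cos ζ + exp (2 * x) := by
    rw [show exp (2 * x) = exp x ^ 2 by rw [← exp_nat_mul]; norm_num]
    nlinarith [sq_nonneg (exp x - 1)]
  calc x + log 2 = log (2 * exp x) := by rw [log_mul two_ne_zero hex.ne', log_exp, add_comm]
    _ ≤ _ := log_le_log (by positivity) hA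

lemma pi_div_five_lt_log_two : π / 5 < log 2 := by
  linarith [pi_lt_d4, log_two_gt_d9]

theorem r_zeta_lower_bound_pos (x ζ : ℝ) (hx : 0 < x) (hζ : |ζ| ≤ Real.pi / 10) :
    (1 / 4) * (Real.log (1 + 2 * Real.exp x * Real.cos ζ + Real.exp (2 * x))) ^ 2
      - (Real.arctan (Real.sin ζ / (Real.cos ζ + Real.exp (-x)))) ^ 2
      ≥ x ^ 2 / 4 := by
  obtain ⟨hζ_lo, hζ_hi⟩ := abs_le.1 hζ
  have hcos : 0 ≤ cos ζ := cos_nonneg_of_mem_Icc ⟨by linarith [pi_pos], by linarith [pi_pos]⟩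
  have hlog := add_log_two_le_log_one_add_two_mul_exp_mul_cos_add_exp (x := x) hcos
  have harctan : arctan (sin ζ / (cos ζ + exp (-x))) ^ 2 ≤ ζ ^ 2 :=
    sq_le_sq.2 (abs_arctan_sin_div_cos_add_le (by linarith [pi_pos]) (exp_pos _).le)
  have hζ_sq : ζ ^ 2 ≤ (log 2 / 2) ^ 2 := by
    rw [← sq_abs]
    exact pow_le_pow_left₀ (abs_nonneg ζ) (by linarith [pi_div_five_lt_log_two]) 2
  have hlog2 : 0 < log 2 := log_pos one_lt_two
  nlinarith [pow_le_pow_left₀ (by positivity) hlog 2]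
end

section
/- For every t ≥ 1 and every real a > 0, with h > 0 and n⁺ a positive integer such that n⁺h ≥ a, the tail sum ∑_{k > n⁺} h·(2/√π)(1+e^{-kh})^{-1}·e^{-t(kh)²} is bounded by (2/√π)·t^{-1/2}·e^{-(n⁺h)²}/(n⁺h). -/
/-!
Dropping the factor `(1 + e^{-kh})⁻¹ ≤ 1`, the tail is a Riemann sum of the Gaussian
`e^{-t x²}` beyond `c = n⁺h`. Expanding `(c + x)² ≥ c² + 2cx` dominates it by a geometric series
with ratio `e^{-2tch}`, whose sum is `(e^{2tch} - 1)⁻¹ ≤ (2tch)⁻¹`; this is the discrete form of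
`∫_c^∞ e^{-tx²} dx ≤ e^{-tc²}/(2tc)`. Finally `t ≥ 1` gives `e^{-tc²} ≤ e^{-c²}` and `1/(2t) ≤ t^{-1/2}`.
-/

open Real

lemma hasSum_exp_neg_pow_succ {s : ℝ} (hs : 0 < s) :
    HasSum (fun k : ℕ => exp (-s) ^ (k + 1)) (exp s - 1)⁻¹ := by
  have hr : exp (-s) < 1 := exp_lt_one_iff.mpr (by linarith)
  have hsum := (hasSum_geometric_of_lt_one (exp_pos _).le hr).mul_left (exp (-s))
  have hsum_eq : exp (-s) * (1 - exp (-s))⁻¹ = (exp s - 1)⁻¹ := by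
    have : exp s - 1 ≠ 0 := by linarith [one_lt_exp_iff.mpr hs]
    rw [exp_neg]
    field_simp
  simpa only [pow_succ', hsum_eq] using hsum

lemma exp_neg_mul_sq_grid_le {t n h : ℝ} (ht : 0 ≤ t) (k : ℕ) :
    exp (-t * ((n + 1 + k) * h) ^ 2) ≤
      exp (-t * (n * h) ^ 2) * exp (-(2 * t * n * h ^ 2)) ^ (k + 1) := by
  rw [← exp_nat_mul, ← exp_add, exp_le_exp]
  have : 0 ≤ t * (((k : ℝ) + 1) * h) ^ 2 := by positivity
  push_cast
  nlinarith

lemma summable_exp_neg_mul_sq_grid {t n h : ℝ} (ht : 0 < t) (hn : 0 < n) (hh : 0 < h) :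
    Summable fun k : ℕ => exp (-t * ((n + 1 + k) * h) ^ 2) :=
  .of_nonneg_of_le (fun _ => (exp_pos _).le) (exp_neg_mul_sq_grid_le ht.le)
    ((hasSum_exp_neg_pow_succ (by positivity)).summable.mul_left _)

lemma mul_tsum_exp_neg_mul_sq_grid_le {t n h : ℝ} (ht : 0 < t) (hn : 0 < n) (hh : 0 < h) :
    h * ∑' k : ℕ, exp (-t * ((n + 1 + k) * h) ^ 2) ≤
      exp (-t * (n * h) ^ 2) / (2 * t * (n * h)) := by
  have hs : 0 < 2 * t * n * h ^ 2 := by positivity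
  have hgeom := (hasSum_exp_neg_pow_succ hs).mul_left (exp (-t * (n * h) ^ 2))
  have hsum_le : ∑' k : ℕ, exp (-t * ((n + 1 + k) * h) ^ 2) ≤
      exp (-t * (n * h) ^ 2) * (exp (2 * t * n * h ^ 2) - 1)⁻¹ :=
    hgeom.tsum_eq ▸ (summable_exp_neg_mul_sq_grid ht hn hh).tsum_le_tsum
      (exp_neg_mul_sq_grid_le ht.le) hgeom.summable
  have hratio : (exp (2 * t * n * h ^ 2) - 1)⁻¹ ≤ (2 * t * n * h ^ 2)⁻¹ :=
    inv_anti₀ hs (by linarith [add_one_le_exp (2 * t * n * h ^ 2)])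
  calc h * ∑' k : ℕ, exp (-t * ((n + 1 + k) * h) ^ 2)
      ≤ h * (exp (-t * (n * h) ^ 2) * (2 * t * n * h ^ 2)⁻¹) := by
        gcongr; exact hsum_le.trans (by gcongr)
    _ = exp (-t * (n * h) ^ 2) / (2 * t * (n * h)) := by field_simp

lemma exp_neg_mul_sq_div_le {t c : ℝ} (ht : 1 ≤ t) (hc : 0 < c) :
    exp (-t * c ^ 2) / (2 * t * c) ≤ t ^ (-(1 : ℝ) / 2) * exp (-c ^ 2) / c := by
  have ht0 : 0 < t := by linarith
  have hsqrt : sqrt t ≤ 2 * t := by nlinarith [sq_sqrt ht0.le, one_le_sqrt.mpr ht]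
  calc exp (-t * c ^ 2) / (2 * t * c) = (2 * t)⁻¹ * (exp (-t * c ^ 2) / c) := by
        field_simp
    _ ≤ (sqrt t)⁻¹ * (exp (-c ^ 2) / c) := by
        gcongr
        nlinarith [sq_nonneg c]
    _ = t ^ (-(1 : ℝ) / 2) * exp (-c ^ 2) / c := by
        rw [show -(1 : ℝ) / 2 = -(1 / 2) by ring, rpow_neg ht0.le, ← sqrt_eq_rpow, mul_div_assoc]

theorem sinc_quadrature_positive_tail_general (t h : ℝ) (ht : 1 ≤ t) (hh : 0 < h)
    (np : ℕ) (hnp : 0 < np) :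
    (∑' k : ℕ,
        h * (2 / Real.sqrt Real.pi) *
          (1 + Real.exp (-(((np : ℝ) + 1 + k) * h)))⁻¹ *
          Real.exp (-t * (((np : ℝ) + 1 + k) * h) ^ 2))
      ≤ (2 / Real.sqrt Real.pi) * t ^ (-(1 : ℝ) / 2) *
          Real.exp (-((np : ℝ) * h) ^ 2) / ((np : ℝ) * h) := by
  have ht0 : 0 < t := by linarith
  have hn : (0 : ℝ) < np := by exact_mod_cast hnp
  have hterm (k : ℕ) : h * (2 / sqrt π) * (1 + exp (-(((np : ℝ) + 1 + k) * h)))⁻¹ *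
      exp (-t * (((np : ℝ) + 1 + k) * h) ^ 2) ≤
        2 / sqrt π * (h * exp (-t * (((np : ℝ) + 1 + k) * h) ^ 2)) :=
    calc _ ≤ h * (2 / sqrt π) * 1 * exp (-t * (((np : ℝ) + 1 + k) * h) ^ 2) := by
          gcongr; exact inv_le_one_of_one_le₀ (le_add_of_nonneg_right (exp_pos _).le)
      _ = _ := by ring
  have hdom := ((summable_exp_neg_mul_sq_grid ht0 hn hh).mul_left h).mul_left (2 / sqrt π)
  calc _ ≤ ∑' k : ℕ, 2 / sqrt π * (h * exp (-t * (((np : ℝ) + 1 + k) * h) ^ 2)) :=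
        (hdom.of_nonneg_of_le (fun k => by positivity) hterm).tsum_le_tsum hterm hdom
    _ = 2 / sqrt π * (h * ∑' k : ℕ, exp (-t * (((np : ℝ) + 1 + k) * h) ^ 2)) := by
        rw [tsum_mul_left, tsum_mul_left]
    _ ≤ 2 / sqrt π * (exp (-t * ((np : ℝ) * h) ^ 2) / (2 * t * ((np : ℝ) * h))) := by
        gcongr; exact mul_tsum_exp_neg_mul_sq_grid_le ht0 hn hh
    _ ≤ 2 / sqrt π * (t ^ (-(1 : ℝ) / 2) * exp (-((np : ℝ) * h) ^ 2) / ((np : ℝ) * h)) :=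
        mul_le_mul_of_nonneg_left (exp_neg_mul_sq_div_le ht (by positivity)) (by positivity)
    _ = _ := by ring

theorem sinc_quadrature_positive_tail (t h a : ℝ) (ht : 1 ≤ t) (hh : 0 < h)
    (ha : 0 < a) (np : ℕ) (hnp : 0 < np) (hnph : a ≤ (np : ℝ) * h) :
    (∑' k : ℕ,
        h * (2 / Real.sqrt Real.pi) *
          (1 + Real.exp (-(((np : ℝ) + 1 + k) * h)))⁻¹ *
          Real.exp (-t * (((np : ℝ) + 1 + k) * h) ^ 2))
      ≤ (2 / Real.sqrt Real.pi) * t ^ (-(1 : ℝ) / 2) *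
          Real.exp (-((np : ℝ) * h) ^ 2) / ((np : ℝ) * h) :=
  sinc_quadrature_positive_tail_general t h ht hh np hnp
end

section
/- For every t ≥ 1, every h > 0 and every positive integer n, the tail sum ∑_{k < -n} h·(2/√π)(1+e^{-kh})^{-1}·e^{-t·ln²(1+e^{kh})} is bounded by (2/√π)·e^{-nh}. -/
/-!
Each summand is at most `h · (2/√π) · e^{kh}`: the Gaussian factor is at most `1` because `t ≥ 0`,
and `(1 + e^{-x})⁻¹ ≤ e^{x}`. The remaining geometric series sums to `h e^{-nh} / (e^h - 1)`,
which is at most `e^{-nh}` because `h ≤ e^h - 1`.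
-/

open Real

lemma inv_one_add_exp_neg_le_exp (x : ℝ) : (1 + exp (-x))⁻¹ ≤ exp x := by
  rw [exp_neg, ← one_div, div_le_iff₀ (by positivity), mul_add, mul_inv_cancel₀ (exp_pos x).ne']
  linarith [exp_pos x]

lemma exp_neg_mul_sq_le_one {t : ℝ} (ht : 0 ≤ t) (y : ℝ) : exp (-t * y ^ 2) ≤ 1 :=
  exp_le_one_iff.mpr (by nlinarith [sq_nonneg y])

lemma hasSum_exp_neg_add_nat_mul (a : ℝ) {h : ℝ} (hh : 0 < h) :
    HasSum (fun k : ℕ => exp (-(a + 1 + k) * h)) (exp (-(a + 1) * h) * (1 - exp (-h))⁻¹) := by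
  have hsplit : ∀ k : ℕ, exp (-(a + 1 + k) * h) = exp (-(a + 1) * h) * exp (-h) ^ k := by
    intro k
    rw [← exp_nat_mul, ← exp_add]
    ring_nf
  simp only [hsplit]
  exact (hasSum_geometric_of_lt_one (exp_pos _).le (exp_lt_one_iff.mpr (neg_lt_zero.mpr hh))).mul_left _

lemma mul_tsum_exp_neg_add_nat_mul_le (a : ℝ) {h : ℝ} (hh : 0 < h) :
    h * ∑' k : ℕ, exp (-(a + 1 + k) * h) ≤ exp (-(a * h)) := by
  have hden : 0 < exp h - 1 := by linarith [add_one_lt_exp hh.ne']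
  have hsum : exp (-(a + 1) * h) * (1 - exp (-h))⁻¹ = exp (-(a * h)) / (exp h - 1) := by
    rw [show -(a + 1) * h = -(a * h) + -h by ring, exp_add, exp_neg h]
    field_simp
  rw [(hasSum_exp_neg_add_nat_mul a hh).tsum_eq, hsum, mul_div_assoc', div_le_iff₀ hden]
  nlinarith [add_one_le_exp h, exp_pos (-(a * h))]

lemma sinc_summand_le {t : ℝ} (ht : 0 ≤ t) {c : ℝ} (hc : 0 ≤ c) (x : ℝ) :
    c * (1 + exp (-x))⁻¹ * exp (-t * log (1 + exp x) ^ 2) ≤ c * exp x := by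
  calc c * (1 + exp (-x))⁻¹ * exp (-t * log (1 + exp x) ^ 2)
      ≤ c * exp x * 1 := by
        gcongr
        exacts [inv_one_add_exp_neg_le_exp x, exp_neg_mul_sq_le_one ht _]
    _ = c * exp x := mul_one _

theorem sinc_quadrature_negative_tail_general (t h : ℝ) (ht : 1 ≤ t) (hh : 0 < h)
    (n : ℕ) :
    (∑' k : ℕ,
        h * (2 / Real.sqrt Real.pi) *
          (1 + Real.exp (-(-((n : ℝ) + 1 + k) * h)))⁻¹ *
          Real.exp (-t * (Real.log (1 + Real.exp (-((n : ℝ) + 1 + k) * h))) ^ 2))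
      ≤ (2 / Real.sqrt Real.pi) * Real.exp (-((n : ℝ) * h)) := by
  have ht0 : 0 ≤ t := zero_le_one.trans ht
  have hc : 0 ≤ h * (2 / sqrt π) := by positivity
  have hbound := fun k : ℕ => sinc_summand_le ht0 hc (-((n : ℝ) + 1 + k) * h)
  have hmajorant := (hasSum_exp_neg_add_nat_mul n hh).summable.mul_left (h * (2 / sqrt π))
  calc _ ≤ ∑' k : ℕ, h * (2 / sqrt π) * exp (-((n : ℝ) + 1 + k) * h) :=
        (hmajorant.of_nonneg_of_le (fun k => by positivity) hbound).tsum_le_tsum hbound hmajorant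
    _ = 2 / sqrt π * (h * ∑' k : ℕ, exp (-((n : ℝ) + 1 + k) * h)) := by
        rw [tsum_mul_left]; ring
    _ ≤ 2 / sqrt π * exp (-((n : ℝ) * h)) := by
        gcongr
        exact mul_tsum_exp_neg_add_nat_mul_le n hh

theorem sinc_quadrature_negative_tail (t h : ℝ) (ht : 1 ≤ t) (hh : 0 < h)
    (n : ℕ) (hn : 0 < n) :
    (∑' k : ℕ,
        h * (2 / Real.sqrt Real.pi) *
          (1 + Real.exp (-(-((n : ℝ) + 1 + k) * h)))⁻¹ *
          Real.exp (-t * (Real.log (1 + Real.exp (-((n : ℝ) + 1 + k) * h))) ^ 2))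
      ≤ (2 / Real.sqrt Real.pi) * Real.exp (-((n : ℝ) * h)) :=
  sinc_quadrature_negative_tail_general t h ht hh n
end

section
/- Let u ∈ ℓ²(∇^d), N ∈ ℕ, and suppose Λ^{(1)},…,Λ^{(d)} ⊂ ∇ are finite sets obtained by retaining the N largest values among all contractions {π^{(i)}_ν(u) : ν ∈ ∇, i = 1,…,d}, distributed to their respective coordinate directions, so that ∑_i #Λ^{(i)} ≤ N. Set Λ := Λ^{(1)} × ⋯ × Λ^{(d)}. Then ‖u − R_Λ u‖² ≤ ∑_{i=1}^d ∑_{ν ∈ ∇ \ Λ^{(i)}} |π^{(i)}_ν(u)|², where R_Λ u denotes the restriction of u to Λ (entries outside Λ set to zero). -/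
/-- The squared contraction `|π^{(i)}_ν(u)|²`: the squared ℓ²-norm of the slice of `u`
with `i`-th index fixed to `ν`. -/
noncomputable def contractionSq {I : Type*} {d : ℕ} (u : (Fin d → I) → ℝ) (i : Fin d)
    (ν : I) : ℝ :=
  ∑' m : {m : Fin d → I // m i = ν}, (u m.1) ^ 2

/-!
Every multi-index outside the product set `Λ 0 × ⋯ × Λ (d-1)` has a coordinate `m i ∉ Λ i`,
so the discarded squared entries are covered by the union over `i` of the slabs
`{m | m i ∉ Λ i}`. Summing over each slab fiber by fiber (fibers of `m ↦ m i`) gives exactly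
the squared contractions `contractionSq u i ν` with `ν ∉ Λ i`.
-/

open Set

theorem tsum_subtype_tsum_fiber_eq_tsum_indicator {α β γ : Type*} [AddCommGroup α]
    [UniformSpace α] [IsUniformAddGroup α] [CompleteSpace α] [T2Space α]
    {f : β → α} (hf : Summable f) (g : β → γ) (T : Set γ) :
    ∑' c : T, ∑' b : {b // g b = c}, f b = ∑' b, (g ⁻¹' T).indicator f b := by
  rw [tsum_subtype T fun c => ∑' b : {b // g b = c}, f b,
    ← ((hf.indicator _).hasSum.tsum_fiberwise g).tsum_eq]
  refine tsum_congr fun c => ?_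
  by_cases hc : c ∈ T
  · rw [indicator_of_mem hc]
    refine tsum_congr fun b => (indicator_of_mem ?_ f).symm
    rw [mem_preimage, b.2]
    exact hc
  · rw [indicator_of_notMem hc, eq_comm]
    refine (tsum_congr fun b => indicator_of_notMem ?_ f).trans tsum_zero
    rw [mem_preimage, b.2]
    exact hc

theorem indicator_le_sum_indicator_of_subset_iUnion {α ι : Type*} [Fintype ι] {f : α → ℝ}
    (hf : 0 ≤ f) {s : Set α} {t : ι → Set α} (hst : s ⊆ ⋃ i, t i) (a : α) :
    s.indicator f a ≤ ∑ i, (t i).indicator f a := by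
  have hnonneg (i : ι) : 0 ≤ (t i).indicator f a := indicator_nonneg (fun b _ => hf b) a
  by_cases ha : a ∈ s
  · obtain ⟨i, hi⟩ := mem_iUnion.mp (hst ha)
    rw [indicator_of_mem ha, ← indicator_of_mem hi f]
    exact Finset.single_le_sum (fun j _ => hnonneg j) (Finset.mem_univ i)
  · rw [indicator_of_notMem ha]
    exact Finset.sum_nonneg fun i _ => hnonneg i

theorem tsum_indicator_le_sum_tsum_indicator {α ι : Type*} [Fintype ι] {f : α → ℝ}
    (hf : Summable f) (hf0 : 0 ≤ f) {s : Set α} {t : ι → Set α} (hst : s ⊆ ⋃ i, t i) :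
    ∑' a, s.indicator f a ≤ ∑ i, ∑' a, (t i).indicator f a := by
  rw [← Summable.tsum_finsetSum fun i _ => hf.indicator (t i)]
  exact (hf.indicator s).tsum_le_tsum (indicator_le_sum_indicator_of_subset_iUnion hf0 hst)
    (summable_sum fun i _ => hf.indicator (t i))

theorem coarsening_error_bound_general {I : Type*} (d : ℕ)
    (u : (Fin d → I) → ℝ) (hu : Summable fun m : Fin d → I => (u m) ^ 2)
    (Λ : Fin d → Finset I) :
    (∑' m : Fin d → I,
        (u m - Set.indicator {m : Fin d → I | ∀ i, m i ∈ Λ i} u m) ^ 2)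
      ≤ ∑ i : Fin d, ∑' ν : {ν : I // ν ∉ Λ i},
          (Real.sqrt (contractionSq u i ν.1)) ^ 2 := by
  set S : Set (Fin d → I) := {m | ∀ i, m i ∈ Λ i}
  have hS : Sᶜ ⊆ ⋃ i, {m | m i ∉ Λ i} := fun m hm => by simpa [S] using hm
  have hsq (m) : (u m - S.indicator u m) ^ 2 = Sᶜ.indicator (fun m => u m ^ 2) m := by
    rw [← Pi.sub_apply, ← indicator_compl]
    exact (congrFun
      (indicator_comp_of_zero (g := fun x : ℝ => x ^ 2) (zero_pow two_ne_zero)) m).symm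
  have hcontr (i ν) : Real.sqrt (contractionSq u i ν) ^ 2 = contractionSq u i ν :=
    Real.sq_sqrt (tsum_nonneg fun _ => sq_nonneg _)
  simp_rw [hsq, hcontr]
  refine (tsum_indicator_le_sum_tsum_indicator hu (fun m => sq_nonneg _) hS).trans_eq ?_
  refine Finset.sum_congr rfl fun i _ => ?_
  exact (tsum_subtype_tsum_fiber_eq_tsum_indicator hu (· i) {ν | ν ∉ Λ i}).symm

theorem coarsening_error_bound {I : Type*} [Countable I] (d N : ℕ)
    (u : (Fin d → I) → ℝ) (hu : Summable fun m : Fin d → I => (u m) ^ 2)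
    (Λ : Fin d → Finset I)
    (hcard : ∑ i : Fin d, (Λ i).card ≤ N)
    (hlargest : ∀ i : Fin d, ∀ ν ∈ Λ i, ∀ j : Fin d, ∀ μ : I, μ ∉ Λ j →
      Real.sqrt (contractionSq u j μ) ≤ Real.sqrt (contractionSq u i ν)) :
    (∑' m : Fin d → I,
        (u m - Set.indicator {m : Fin d → I | ∀ i, m i ∈ Λ i} u m) ^ 2)
      ≤ ∑ i : Fin d, ∑' ν : {ν : I // ν ∉ Λ i},
          (Real.sqrt (contractionSq u i ν.1)) ^ 2 :=
  coarsening_error_bound_general d u hu Λ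
end

section
/- Let u ∈ ℓ²(∇^d) and let Λ(u;N) = Λ^{(1)} × ⋯ × Λ^{(d)} be a product set whose factors retain the N largest contraction values (so that the discarded contraction mass ∑_i ∑_{ν∉Λ^{(i)}} |π^{(i)}_ν(u)|² is minimal among all product sets with ∑_i #Λ̂^{(i)} ≤ N). Then for any product set Λ̂ = Λ̂^{(1)} × ⋯ × Λ̂^{(d)} with ∑_i #Λ̂^{(i)} ≤ N, one has ‖u − R_{Λ(u;N)} u‖ ≤ √d · ‖u − R_{Λ̂} u‖. -/
/-- Discarded contraction mass `∑_i ∑_{ν ∉ Λ^{(i)}} |π^{(i)}_ν(u)|²` of a product set. -/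
noncomputable def discardedMass {I : Type*} {d : ℕ} (u : (Fin d → I) → ℝ)
    (Λ : Fin d → Finset I) : ℝ :=
  ∑ i : Fin d, ∑' ν : {ν : I // ν ∉ Λ i}, contractionSq u i ν.1

/-!
Write `S_i(Λ) = {m | m i ∉ Λ i}`. The discarded contraction mass of `Λ` is `∑_i ‖u‖²_{S_i(Λ)}`,
while the squared error of `R_Λ` is `‖u‖²` on `⋃_i S_i(Λ)`. A union is covered by its pieces,
so the error of the optimal `Λ` is at most its discarded mass, hence at most that of `Λhat`;
and each `S_i(Λhat)` lies in the union, so that mass is at most `d` times the error of `Λhat`.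
-/

open Set

theorem tsum_subtype_tsum_fiber {α β : Type*} {f : α → ℝ} (hf : Summable f) (g : α → β)
    (s : Set β) : ∑' b : s, ∑' a : g ⁻¹' {b.1}, f a = ∑' a, (g ⁻¹' s).indicator f a := by
  rw [tsum_subtype s fun b => ∑' a : g ⁻¹' {b}, f a,
    ← ((hf.indicator (g ⁻¹' s)).hasSum.tsum_fiberwise g).tsum_eq]
  refine tsum_congr fun b => ?_
  by_cases hb : b ∈ s
  · rw [indicator_of_mem hb]
    refine tsum_congr fun a => (indicator_of_mem ?_ f).symm
    show g a ∈ s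
    rwa [show g a = b from a.2]
  · rw [indicator_of_notMem hb]
    refine ((tsum_congr fun a => indicator_of_notMem ?_ f).trans tsum_zero).symm
    show g a ∉ s
    rwa [show g a = b from a.2]

theorem discardedMass_eq_sum_tsum_indicator {I : Type*} {d : ℕ} {u : (Fin d → I) → ℝ}
    (hu : Summable fun m => u m ^ 2) (Λ : Fin d → Finset I) :
    discardedMass u Λ = ∑ i, ∑' m, {m : Fin d → I | m i ∉ Λ i}.indicator (fun m => u m ^ 2) m :=
  Finset.sum_congr rfl fun i _ => tsum_subtype_tsum_fiber hu (fun m => m i) {ν | ν ∉ Λ i}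

theorem tsum_sq_sub_indicator {α : Type*} (u : α → ℝ) (s : Set α) :
    ∑' a, (u a - s.indicator u a) ^ 2 = ∑' a, sᶜ.indicator (fun a => u a ^ 2) a := by
  refine tsum_congr fun a => ?_
  by_cases ha : a ∈ s <;> simp [ha]

theorem tsum_indicator_iUnion_le_sum {α ι : Type*} [Fintype ι] {f : α → ℝ} (hf0 : 0 ≤ f)
    (hf : Summable f) (s : ι → Set α) :
    ∑' a, (⋃ i, s i).indicator f a ≤ ∑ i, ∑' a, (s i).indicator f a := by
  have hterm_nonneg (j : ι) (a : α) : 0 ≤ (s j).indicator f a :=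
    indicator_nonneg (fun a _ => hf0 a) a
  rw [← Summable.tsum_finsetSum fun i _ => hf.indicator (s i)]
  refine Summable.tsum_le_tsum (fun a => ?_) (hf.indicator _)
    (summable_sum fun i _ => hf.indicator (s i))
  refine indicator_apply_le' (fun ha => ?_) fun _ => Finset.sum_nonneg fun j _ => hterm_nonneg j a
  obtain ⟨i, hi⟩ := mem_iUnion.mp ha
  calc f a = (s i).indicator f a := (indicator_of_mem hi f).symm
    _ ≤ ∑ j, (s j).indicator f a :=
      Finset.single_le_sum (fun j _ => hterm_nonneg j a) (Finset.mem_univ i)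

theorem sum_tsum_indicator_le_card_mul {α ι : Type*} [Fintype ι] {f : α → ℝ} (hf0 : 0 ≤ f)
    (hf : Summable f) {s : ι → Set α} {t : Set α} (hst : ∀ i, s i ⊆ t) :
    ∑ i, ∑' a, (s i).indicator f a ≤ Fintype.card ι * ∑' a, t.indicator f a := by
  calc ∑ i, ∑' a, (s i).indicator f a ≤ ∑ _i : ι, ∑' a, t.indicator f a :=
        Finset.sum_le_sum fun i _ => Summable.tsum_le_tsum
          (fun a => indicator_le_indicator_of_subset (hst i) hf0 a) (hf.indicator _)
          (hf.indicator _)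
    _ = Fintype.card ι * ∑' a, t.indicator f a := by
      rw [Finset.sum_const, Finset.card_univ, nsmul_eq_mul]

theorem coarsening_near_optimality_general {I : Type*} (d N : ℕ)
    (u : (Fin d → I) → ℝ) (hu : Summable fun m : Fin d → I => (u m) ^ 2)
    (Λ Λhat : Fin d → Finset I)
    (hopt : ∀ Λ' : Fin d → Finset I, (∑ i : Fin d, (Λ' i).card) ≤ N →
      discardedMass u Λ ≤ discardedMass u Λ')
    (hcardΛhat : ∑ i : Fin d, (Λhat i).card ≤ N) :
    Real.sqrt (∑' m : Fin d → I,
        (u m - Set.indicator {m : Fin d → I | ∀ i, m i ∈ Λ i} u m) ^ 2)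
      ≤ Real.sqrt d *
        Real.sqrt (∑' m : Fin d → I,
          (u m - Set.indicator {m : Fin d → I | ∀ i, m i ∈ Λhat i} u m) ^ 2) := by
  have hu0 : 0 ≤ fun m => u m ^ 2 := fun m => sq_nonneg (u m)
  have hcompl (Λ' : Fin d → Finset I) :
      {m : Fin d → I | ∀ i, m i ∈ Λ' i}ᶜ = ⋃ i, {m | m i ∉ Λ' i} := by
    ext m
    simp
  rw [tsum_sq_sub_indicator, tsum_sq_sub_indicator, hcompl, hcompl,
    ← Real.sqrt_mul d.cast_nonneg]
  refine Real.sqrt_le_sqrt ?_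
  calc _ ≤ ∑ i, ∑' m, {m : Fin d → I | m i ∉ Λ i}.indicator (fun m => u m ^ 2) m :=
        tsum_indicator_iUnion_le_sum hu0 hu _
    _ = discardedMass u Λ := (discardedMass_eq_sum_tsum_indicator hu Λ).symm
    _ ≤ discardedMass u Λhat := hopt Λhat hcardΛhat
    _ = ∑ i, ∑' m, {m : Fin d → I | m i ∉ Λhat i}.indicator (fun m => u m ^ 2) m :=
        discardedMass_eq_sum_tsum_indicator hu Λhat
    _ ≤ _ := by
        simpa using sum_tsum_indicator_le_card_mul hu0 hu
          (subset_iUnion fun i => {m : Fin d → I | m i ∉ Λhat i})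

theorem coarsening_near_optimality {I : Type*} [Countable I] (d N : ℕ)
    (u : (Fin d → I) → ℝ) (hu : Summable fun m : Fin d → I => (u m) ^ 2)
    (Λ Λhat : Fin d → Finset I)
    (hcardΛ : ∑ i : Fin d, (Λ i).card ≤ N)
    (hopt : ∀ Λ' : Fin d → Finset I, (∑ i : Fin d, (Λ' i).card) ≤ N →
      discardedMass u Λ ≤ discardedMass u Λ')
    (hcardΛhat : ∑ i : Fin d, (Λhat i).card ≤ N) :
    Real.sqrt (∑' m : Fin d → I,
        (u m - Set.indicator {m : Fin d → I | ∀ i, m i ∈ Λ i} u m) ^ 2)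
      ≤ Real.sqrt d *
        Real.sqrt (∑' m : Fin d → I,
          (u m - Set.indicator {m : Fin d → I | ∀ i, m i ∈ Λhat i} u m) ^ 2) :=
  coarsening_near_optimality_general d N u hu Λ Λhat hopt hcardΛhat
end

section
/- Let ω^{(i)}_ν > 0 (i=1,…,d, ν ∈ ∇) and define the global weights ω_ν = (∑_{i=1}^d (ω^{(i)}_{ν_i})²)^{1/2} for ν ∈ ∇^d, with corresponding diagonal scaling S on ℓ²(∇^d) and one-dimensional scalings Ŝ_i = diag(ω^{(i)}_ν) on ℓ²(∇). Then for any bounded operator B on ℓ²(∇), the operator norm of S^{-1}(B ⊗ id ⊗ ⋯ ⊗ id)S^{-1} on ℓ²(∇^d) is bounded by the operator norm of Ŝ_1^{-1} B Ŝ_1^{-1} on ℓ²(∇). -/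
/-- The global scaling weight `ω_ν = (∑_i (ω^{(i)}_{ν_i})²)^{1/2}` built from
one-dimensional weights `ωi`. -/
noncomputable def globalWeight {ι : Type*} {d : ℕ} (ωi : Fin d → ι → ℝ)
    (ν : Fin d → ι) : ℝ :=
  Real.sqrt (∑ i : Fin d, (ωi i (ν i)) ^ 2)

/-!
Splitting `∇^d ≃ ∇ × ∇^{d-1}` at the first coordinate, `M = D (A ⊗ id) D`, where `D` is the
diagonal operator `S⁻¹(Ŝ₁ ⊗ id)` with entries `ω^{(1)}_{ν₁} / ω_ν ∈ [0, 1]`. On every slice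
`∇ × {r}` the operator `A ⊗ id` acts as `A`, and the squared `ℓ²` norm is the sum of the squared
norms of the slices, so `‖A ⊗ id‖ ≤ ‖A‖`; together with `‖D‖ ≤ 1` this gives `‖M‖ ≤ ‖A‖`.
-/

open scoped ENNReal
open Function

theorem Memℓp.comp_injective {γ ι E : Type*} [NormedAddCommGroup E] {p : ℝ≥0∞} {f : γ → E}
    (hf : Memℓp f p) {g : ι → γ} (hg : Injective g) : Memℓp (f ∘ g) p := by
  obtain rfl | rfl | hp := p.trichotomy
  · exact memℓp_zero (hf.finite_dsupport.preimage hg.injOn)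
  · exact memℓp_infty (hf.bddAbove.mono (Set.range_comp_subset_range g fun i => ‖f i‖))
  · exact memℓp_gen ((hf.summable hp).comp_injective hg)

namespace lp

variable {γ ι R E : Type*} [NormedAddCommGroup E] {p : ℝ≥0∞}

def slice (e : γ ≃ ι × R) (f : lp (fun _ : γ => E) p) (r : R) : lp (fun _ : ι => E) p :=
  ⟨fun κ => f (e.symm (κ, r)),
    (lp.memℓp f).comp_injective fun _ _ h => by simpa using congrArg (fun x => (e x).1) h⟩

@[simp]
lemma slice_apply (e : γ ≃ ι × R) (f : lp (fun _ : γ => E) p) (r : R) (κ : ι) :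
    slice e f r κ = f (e.symm (κ, r)) :=
  rfl

lemma hasSum_norm_rpow_slice (hp : 0 < p.toReal) (e : γ ≃ ι × R) (f : lp (fun _ : γ => E) p) :
    HasSum (fun r => ‖slice e f r‖ ^ p.toReal) (‖f‖ ^ p.toReal) := by
  have h := (e.trans (Equiv.prodComm ι R)).symm.hasSum_iff.2 (lp.hasSum_norm hp f)
  exact h.prod_fiberwise fun r => lp.hasSum_norm hp (slice e f r)

lemma norm_le_of_norm_slice_le (hp : 0 < p.toReal) (e : γ ≃ ι × R) {C : ℝ} (hC : 0 ≤ C)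
    {f g : lp (fun _ : γ => E) p} (h : ∀ r, ‖slice e f r‖ ≤ C * ‖slice e g r‖) :
    ‖f‖ ≤ C * ‖g‖ := by
  rw [← Real.rpow_le_rpow_iff (norm_nonneg' _) (mul_nonneg hC (norm_nonneg' _)) hp,
    Real.mul_rpow hC (norm_nonneg' _)]
  refine hasSum_le (fun r => ?_) (hasSum_norm_rpow_slice hp e f)
    ((hasSum_norm_rpow_slice hp e g).mul_left _)
  rw [← Real.mul_rpow hC (norm_nonneg' _)]
  exact Real.rpow_le_rpow (norm_nonneg' _) (h r) hp.le

end lp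

theorem Equiv.update_funSplitAt_symm {α β : Type*} [DecidableEq α] (i : α) (b b' : β)
    (r : { j // j ≠ i } → β) :
    update ((Equiv.funSplitAt i β).symm (b, r)) i b' = (Equiv.funSplitAt i β).symm (b', r) := by
  ext j
  by_cases h : j = i
  · subst h; simp
  · simp [h]

section GlobalWeight

variable {ι : Type*} {d : ℕ} (ωi : Fin d → ι → ℝ)

lemma abs_le_globalWeight (ν : Fin d → ι) (i : Fin d) : |ωi i (ν i)| ≤ globalWeight ωi ν := by
  rw [← Real.sqrt_sq_eq_abs]
  exact Real.sqrt_le_sqrt <|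
    Finset.single_le_sum (fun j _ => sq_nonneg (ωi j (ν j))) (Finset.mem_univ i)

noncomputable def weightRatio (i : Fin d) (ν : Fin d → ι) : ℝ :=
  ωi i (ν i) / globalWeight ωi ν

lemma norm_weightRatio_le_one (i : Fin d) (ν : Fin d → ι) : ‖weightRatio ωi i ν‖ ≤ 1 := by
  rw [weightRatio, norm_div, Real.norm_eq_abs, Real.norm_eq_abs]
  exact div_le_one_of_le₀ ((abs_le_globalWeight ωi ν i).trans (le_abs_self _)) (abs_nonneg _)

noncomputable def weightRatioCLM (p : ℝ≥0∞) [Fact (1 ≤ p)] (i : Fin d) :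
    lp (fun _ : Fin d → ι => ℝ) p →L[ℝ] lp (fun _ : Fin d → ι => ℝ) p :=
  lp.mapCLM p (fun ν => weightRatio ωi i ν • ContinuousLinearMap.id ℝ ℝ) zero_le_one fun ν => by
    simpa [norm_smul] using norm_weightRatio_le_one ωi i ν

@[simp]
lemma weightRatioCLM_apply (p : ℝ≥0∞) [Fact (1 ≤ p)] (i : Fin d)
    (u : lp (fun _ : Fin d → ι => ℝ) p) (ν : Fin d → ι) :
    weightRatioCLM ωi p i u ν = weightRatio ωi i ν * u ν :=
  rfl

lemma norm_weightRatioCLM_le (p : ℝ≥0∞) [Fact (1 ≤ p)] (i : Fin d) :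
    ‖weightRatioCLM ωi p i‖ ≤ 1 :=
  lp.norm_mapCLM_le ..

end GlobalWeight

lemma slice_apply_eq_weightRatio_mul {ι : Type*} {d : ℕ} {ωi : Fin d → ι → ℝ} {i : Fin d}
    (hωi : ∀ κ, ωi i κ ≠ 0) {b : ι → ι → ℝ}
    {A : lp (fun _ : ι => ℝ) 2 →L[ℝ] lp (fun _ : ι => ℝ) 2}
    {M : lp (fun _ : Fin d → ι => ℝ) 2 →L[ℝ] lp (fun _ : Fin d → ι => ℝ) 2}
    (hA : ∀ (v : lp (fun _ : ι => ℝ) 2) (μ : ι),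
      A v μ = (ωi i μ)⁻¹ * ∑' κ : ι, b μ κ * ((ωi i κ)⁻¹ * v κ))
    (hM : ∀ (u : lp (fun _ : Fin d → ι => ℝ) 2) (ν : Fin d → ι),
      M u ν = (globalWeight ωi ν)⁻¹ *
        ∑' κ : ι, b (ν i) κ * ((globalWeight ωi (update ν i κ))⁻¹ * u (update ν i κ)))
    (u : lp (fun _ : Fin d → ι => ℝ) 2) (r : { j // j ≠ i } → ι) (κ : ι) :
    lp.slice (Equiv.funSplitAt i ι) (M u) r κ =
      weightRatio ωi i ((Equiv.funSplitAt i ι).symm (κ, r)) *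
        A (lp.slice (Equiv.funSplitAt i ι) (weightRatioCLM ωi 2 i u) r) κ := by
  have hcancel : ∀ (κ : ι) (r : { j // j ≠ i } → ι) (x : ℝ),
      weightRatio ωi i ((Equiv.funSplitAt i ι).symm (κ, r)) * ((ωi i κ)⁻¹ * x) =
        (globalWeight ωi ((Equiv.funSplitAt i ι).symm (κ, r)))⁻¹ * x := by
    intro κ r x
    simp only [weightRatio, Equiv.funSplitAt_symm_apply, dite_true]
    rw [div_eq_mul_inv, mul_comm (ωi i κ), mul_assoc, ← mul_assoc (ωi i κ),
      mul_inv_cancel₀ (hωi κ), one_mul]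
  simp only [lp.slice_apply, hM, hA, weightRatioCLM_apply, hcancel, Equiv.update_funSplitAt_symm,
    Equiv.funSplitAt_symm_apply, dite_true]
  congr 2 with κ'
  rw [mul_left_comm (ωi i κ')⁻¹, hcancel]

theorem rescaled_tensor_operator_norm_bound_general {ι : Type*} (d : ℕ) (hd : 0 < d)
    (ωi : Fin d → ι → ℝ) (hωi : ∀ i ν, 0 < ωi i ν)
    (b : ι → ι → ℝ)
    (A : lp (fun _ : ι => ℝ) 2 →L[ℝ] lp (fun _ : ι => ℝ) 2)
    (M : lp (fun _ : Fin d → ι => ℝ) 2 →L[ℝ] lp (fun _ : Fin d → ι => ℝ) 2)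
    -- `A = Ŝ₁⁻¹ B Ŝ₁⁻¹` on `ℓ²(∇)`
    (hA : ∀ (v : lp (fun _ : ι => ℝ) 2) (μ : ι),
      (A v : ∀ _ : ι, ℝ) μ
        = (ωi ⟨0, hd⟩ μ)⁻¹ * ∑' κ : ι, b μ κ * ((ωi ⟨0, hd⟩ κ)⁻¹ * (v : ∀ _ : ι, ℝ) κ))
    -- `M = S⁻¹ (B ⊗ id ⊗ ⋯ ⊗ id) S⁻¹` on `ℓ²(∇^d)`
    (hM : ∀ (u : lp (fun _ : Fin d → ι => ℝ) 2) (ν : Fin d → ι),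
      (M u : ∀ _ : Fin d → ι, ℝ) ν
        = (globalWeight ωi ν)⁻¹ *
            ∑' κ : ι, b (ν ⟨0, hd⟩) κ *
              ((globalWeight ωi (Function.update ν ⟨0, hd⟩ κ))⁻¹ *
                (u : ∀ _ : Fin d → ι, ℝ) (Function.update ν ⟨0, hd⟩ κ))) :
    ‖M‖ ≤ ‖A‖ := by
  set i : Fin d := ⟨0, hd⟩
  set e := Equiv.funSplitAt i ι
  set D := weightRatioCLM ωi 2 i
  refine M.opNorm_le_bound (norm_nonneg A) fun u => ?_
  have hslice (r : { j // j ≠ i } → ι) : ‖lp.slice e (M u) r‖ ≤ ‖A‖ * ‖lp.slice e (D u) r‖ := by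
    refine (lp.norm_mono two_ne_zero fun κ => ?_).trans (A.le_opNorm _)
    rw [slice_apply_eq_weightRatio_mul (fun κ => (hωi i κ).ne') hA hM, norm_mul]
    exact mul_le_of_le_one_left (norm_nonneg _) (norm_weightRatio_le_one ωi i _)
  calc ‖M u‖ ≤ ‖A‖ * ‖D u‖ := lp.norm_le_of_norm_slice_le (by norm_num) e (norm_nonneg A) hslice
    _ ≤ ‖A‖ * ‖u‖ := by
      gcongr
      exact D.le_of_opNorm_le (norm_weightRatioCLM_le ωi 2 i) u |>.trans_eq (one_mul _)

theorem rescaled_tensor_operator_norm_bound {ι : Type*} (d : ℕ) (hd : 0 < d)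
    (ωi : Fin d → ι → ℝ) (hωi : ∀ i ν, 0 < ωi i ν)
    (b : ι → ι → ℝ)
    (B A : lp (fun _ : ι => ℝ) 2 →L[ℝ] lp (fun _ : ι => ℝ) 2)
    (M : lp (fun _ : Fin d → ι => ℝ) 2 →L[ℝ] lp (fun _ : Fin d → ι => ℝ) 2)
    -- `B` is the bounded operator on `ℓ²(∇)` with matrix `b`
    (hB : ∀ (v : lp (fun _ : ι => ℝ) 2) (μ : ι),
      (B v : ∀ _ : ι, ℝ) μ = ∑' κ : ι, b μ κ * (v : ∀ _ : ι, ℝ) κ)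
    -- `A = Ŝ₁⁻¹ B Ŝ₁⁻¹` on `ℓ²(∇)`
    (hA : ∀ (v : lp (fun _ : ι => ℝ) 2) (μ : ι),
      (A v : ∀ _ : ι, ℝ) μ
        = (ωi ⟨0, hd⟩ μ)⁻¹ * ∑' κ : ι, b μ κ * ((ωi ⟨0, hd⟩ κ)⁻¹ * (v : ∀ _ : ι, ℝ) κ))
    -- `M = S⁻¹ (B ⊗ id ⊗ ⋯ ⊗ id) S⁻¹` on `ℓ²(∇^d)`
    (hM : ∀ (u : lp (fun _ : Fin d → ι => ℝ) 2) (ν : Fin d → ι),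
      (M u : ∀ _ : Fin d → ι, ℝ) ν
        = (globalWeight ωi ν)⁻¹ *
            ∑' κ : ι, b (ν ⟨0, hd⟩) κ *
              ((globalWeight ωi (Function.update ν ⟨0, hd⟩ κ))⁻¹ *
                (u : ∀ _ : Fin d → ι, ℝ) (Function.update ν ⟨0, hd⟩ κ))) :
    ‖M‖ ≤ ‖A‖ :=
  rescaled_tensor_operator_norm_bound_general d hd ωi hωi b A M hA hM
end
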